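/- Let d ≥ 1, let Ξ be a nonempty finite type, let f : Ξ → (Fin d → Fin d) be a family of functions, let λ be a probability vector on Ξ, and let A be the column-stochastic matrix A x x' = ∑_{ξ : f ξ x' = x} λ ξ. Set D = max over x ∈ Fin d of ∑_ξ |（f ξ)⁻¹({x})|. Then A admits a classical Stinespring dilation with ancilla dimension D: there exist a probability vector q on Fin D and a permutation π of Fin d × Fin D such that A x x' = ∑_{y' ∈ Fin D, (π (x', y')).1 = x} q y' for all x, x'. (This improves the generic ancilla dimension N·d of the explicit construction to max_x ∑_ξ |f_ξ⁻¹(x)|.) -/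

import Mathlib

/-!
Extend the ancilla `Ξ` by `D - |Ξ|` dummy symbols of weight zero. The map `(x', ξ) ↦ f ξ x'`
hits each `x` exactly `c x = ∑ ξ, |f ξ⁻¹(x)| ≤ D` times, and since `∑ x, (D - c x) = d (D - |Ξ|)`
the dummy symbols can be sent to outputs so that every fiber of the extended map
`Fin d × (Ξ ⊕ dummies) → Fin d` has exactly `D` elements. A map `X × Y → X` all of whose fibers
have `|Y|` elements is the first component of a permutation of `X × Y`.
-/

open Finset

section Fibers

variable {α β : Type*} [Fintype α] [Fintype β] [DecidableEq β]

theorem exists_card_fiber_eq (m : β → ℕ) (h : Fintype.card α = ∑ b, m b) :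
    ∃ g : α → β, ∀ b, #{a | g a = b} = m b := by
  let e : α ≃ Σ b, Fin (m b) := Fintype.equivOfCardEq (by simpa using h)
  refine ⟨fun a => (e a).1, fun b => ?_⟩
  rw [card_filter, e.sum_comp (fun s => if s.1 = b then 1 else 0), Fintype.sum_sigma]
  simp [apply_ite card]

theorem sum_card_fiber_eq_card (g : α → β) : ∑ b, #{a | g a = b} = Fintype.card α :=
  (card_eq_sum_card_fiberwise fun a _ => mem_univ (g a)).symm

end Fibers

section Dilation

variable {X Y : Type*} [Fintype Y] [DecidableEq X]

theorem card_filter_fst_eq [Fintype X] (x : X) : #{p : X × Y | p.1 = x} = Fintype.card Y := by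
  rw [card_filter, Fintype.sum_prod_type]
  simp [apply_ite card]

theorem exists_perm_fst_eq [Fintype X] (F : X × Y → X)
    (hF : ∀ x, #{p | F p = x} = Fintype.card Y) :
    ∃ π : Equiv.Perm (X × Y), ∀ p, (π p).1 = F p :=
  ⟨Equiv.ofFiberEquiv fun x => Fintype.equivOfCardEq
      (by rw [Fintype.card_subtype, Fintype.card_subtype, hF, card_filter_fst_eq]),
    Equiv.ofFiberEquiv_map _⟩

def IsClassicalDilation (A : X → X → ℝ) (q : Y → ℝ) (π : Equiv.Perm (X × Y)) : Prop :=
  (∀ y, 0 ≤ q y) ∧ ∑ y, q y = 1 ∧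
    ∀ x x', A x x' = ∑ y ∈ univ.filter (fun y => (π (x', y)).1 = x), q y

theorem IsClassicalDilation.permCongr {Y' : Type*} [Fintype Y'] {A : X → X → ℝ} {q : Y → ℝ}
    {π : Equiv.Perm (X × Y)} (h : IsClassicalDilation A q π) (e : Y' ≃ Y) :
    IsClassicalDilation A (q ∘ e) (((Equiv.refl X).prodCongr e.symm).permCongr π) := by
  obtain ⟨hq0, hq1, hA⟩ := h
  refine ⟨fun y => hq0 (e y), by rwa [Function.comp_def, e.sum_comp q], fun x x' => ?_⟩
  rw [hA, sum_filter, sum_filter, ← e.sum_comp]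
  rfl

theorem exists_isClassicalDilation_of_card_fiber [Fintype X] (F : X × Y → X)
    (hF : ∀ x, #{p | F p = x} = Fintype.card Y) (q : Y → ℝ) (hq0 : ∀ y, 0 ≤ q y)
    (hq1 : ∑ y, q y = 1) :
    ∃ π, IsClassicalDilation (fun x x' => ∑ y ∈ univ.filter (fun y => F (x', y) = x), q y) q π := by
  obtain ⟨π, hπ⟩ := exists_perm_fst_eq F hF
  exact ⟨π, hq0, hq1, fun x x' => by simp only [hπ]⟩

end Dilation

section Padding

variable {X Ξ P : Type*} [Fintype X] [DecidableEq X] [Fintype Ξ] [Fintype P]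

theorem sum_sum_card_fiber (f : Ξ → X → X) :
    ∑ x, ∑ ξ, #{x' | f ξ x' = x} = Fintype.card Ξ * Fintype.card X := by
  rw [sum_comm]
  simp [sum_card_fiber_eq_card]

theorem card_le_sup_sum_card_fiber [Nonempty X] (f : Ξ → X → X) :
    Fintype.card Ξ ≤ univ.sup fun x => ∑ ξ, #{x' | f ξ x' = x} := by
  refine le_of_mul_le_mul_right ?_ (Fintype.card_pos (α := X))
  calc Fintype.card Ξ * Fintype.card X = ∑ x, ∑ ξ, #{x' | f ξ x' = x} :=
        (sum_sum_card_fiber f).symm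
    _ ≤ ∑ _x : X, univ.sup fun x => ∑ ξ, #{x' | f ξ x' = x} :=
      sum_le_sum fun x _ => le_sup (f := fun x => ∑ ξ, #{x' | f ξ x' = x}) (mem_univ x)
    _ = _ := by simp [mul_comm]

theorem card_fiber_sumElim (f : Ξ → X → X) (pad : X × P → X) (x : X) :
    #{p : X × (Ξ ⊕ P) | Sum.elim (f · p.1) (fun j => pad (p.1, j)) p.2 = x} =
      ∑ ξ, #{x' | f ξ x' = x} + #{p | pad p = x} := by
  simp only [card_filter, Fintype.sum_prod_type, Fintype.sum_sum_type, Sum.elim_inl,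
    Sum.elim_inr, sum_add_distrib]
  exact congrArg (· + _) sum_comm

theorem exists_isClassicalDilation_sum (f : Ξ → X → X) (lam : Ξ → ℝ) (hl0 : ∀ ξ, 0 ≤ lam ξ)
    (hl1 : ∑ ξ, lam ξ = 1) (pad : X × P → X)
    (hpad : ∀ x, ∑ ξ, #{x' | f ξ x' = x} + #{p | pad p = x} = Fintype.card Ξ + Fintype.card P) :
    ∃ π : Equiv.Perm (X × (Ξ ⊕ P)),
      IsClassicalDilation (fun x x' => ∑ ξ ∈ univ.filter (fun ξ => f ξ x' = x), lam ξ)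
        (Sum.elim lam 0) π := by
  obtain ⟨π, hπ⟩ := exists_isClassicalDilation_of_card_fiber
    (fun p : X × (Ξ ⊕ P) => Sum.elim (f · p.1) (fun j => pad (p.1, j)) p.2)
    (fun x => by rw [card_fiber_sumElim, hpad, Fintype.card_sum]) (Sum.elim lam 0)
    (by rintro (ξ | j); exacts [hl0 ξ, le_rfl]) (by simp [hl1])
  refine ⟨π, ?_⟩
  convert hπ using 3 with x x'
  rw [sum_filter, sum_filter, Fintype.sum_sum_type]
  exact (add_zero _).symm.trans (congrArg₂ (· + ·) rfl (sum_eq_zero fun _ _ => ite_self _).symm)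

end Padding

theorem stinespring_improved_dim_general (d : ℕ) (hd : 1 ≤ d)
    (Ξ : Type) [Fintype Ξ]
    (f : Ξ → Fin d → Fin d)
    (lam : Ξ → ℝ) (hl0 : ∀ ξ, 0 ≤ lam ξ) (hl1 : ∑ ξ, lam ξ = 1)
    (D : ℕ)
    (hD : D = Finset.univ.sup
      (fun x : Fin d => ∑ ξ : Ξ, (Finset.univ.filter (fun x' : Fin d => f ξ x' = x)).card)) :
    ∃ (q : Fin D → ℝ) (π : Equiv.Perm (Fin d × Fin D)),
      (∀ y, 0 ≤ q y) ∧ (∑ y, q y = 1) ∧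
      ∀ x x' : Fin d,
        (∑ ξ ∈ Finset.univ.filter (fun ξ : Ξ => f ξ x' = x), lam ξ) =
          ∑ y' ∈ Finset.univ.filter (fun y' : Fin D => (π (x', y')).1 = x), q y' := by
  have : Nonempty (Fin d) := ⟨⟨0, hd⟩⟩
  have hcD (x : Fin d) : ∑ ξ, #{x' | f ξ x' = x} ≤ D :=
    hD ▸ le_sup (f := fun x => ∑ ξ, #{x' | f ξ x' = x}) (mem_univ x)
  have hND : Fintype.card Ξ ≤ D := hD ▸ card_le_sup_sum_card_fiber f
  obtain ⟨pad, hpad⟩ := exists_card_fiber_eq (α := Fin d × Fin (D - Fintype.card Ξ))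
      (fun x => D - ∑ ξ, #{x' | f ξ x' = x}) <| by
    rw [sum_tsub_distrib _ fun x _ => hcD x, sum_sum_card_fiber]
    simp [Nat.mul_sub, mul_comm]
  obtain ⟨π, hπ⟩ := exists_isClassicalDilation_sum f lam hl0 hl1 pad fun x => by
    rw [hpad, Fintype.card_fin]
    have := hcD x
    omega
  obtain ⟨e⟩ : Nonempty (Fin D ≃ Ξ ⊕ Fin (D - Fintype.card Ξ)) :=
    ⟨Fintype.equivOfCardEq (by simp only [Fintype.card_fin, Fintype.card_sum]; omega)⟩
  obtain ⟨hq0, hq1, hA⟩ := hπ.permCongr e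
  exact ⟨_, _, hq0, hq1, hA⟩

/-- A stochastic matrix given as a convex combination of deterministic maps `f ξ`
admits a classical Stinespring dilation with ancilla dimension
`D = max_x ∑_ξ |f_ξ⁻¹({x})|`. -/
theorem stinespring_improved_dim (d : ℕ) (hd : 1 ≤ d)
    (Ξ : Type) [Fintype Ξ] [Nonempty Ξ]
    (f : Ξ → Fin d → Fin d)
    (lam : Ξ → ℝ) (hl0 : ∀ ξ, 0 ≤ lam ξ) (hl1 : ∑ ξ, lam ξ = 1)
    (D : ℕ)
    (hD : D = Finset.univ.sup
      (fun x : Fin d => ∑ ξ : Ξ, (Finset.univ.filter (fun x' : Fin d => f ξ x' = x)).card)) :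
    ∃ (q : Fin D → ℝ) (π : Equiv.Perm (Fin d × Fin D)),
      (∀ y, 0 ≤ q y) ∧ (∑ y, q y = 1) ∧
      ∀ x x' : Fin d,
        (∑ ξ ∈ Finset.univ.filter (fun ξ : Ξ => f ξ x' = x), lam ξ) =
          ∑ y' ∈ Finset.univ.filter (fun y' : Fin D => (π (x', y')).1 = x), q y' :=
  stinespring_improved_dim_general d hd Ξ f lam hl0 hl1 D hD
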